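/- arXiv:2412.20143 — 4 statements merged into one kernel-verified Lean document; each statement's English description precedes it below -/
import Mathlib

section
/- For every natural number n ≥ 1, the number g(n) of translation-equivalence classes of pairs (P, c), where P is a polyomino with n cells and c = (x, y) is a cell of P such that none of the cells (x−1, y−1), (x, y−1), (x+1, y−1), (x−1, y) belongs to P, satisfies g(n) ≤ G(n), where G is defined by the mutual recurrence F(0) = F(1) = G(0) = G(1) = 1 and, for n ≥ 2, F(n) = G(n) + ∑_{ℓ,m ≥ 1, ℓ+m = n} G(ℓ)G(m) and G(n) = F(n−1) + G(n−1) + ∑_{ℓ,m ≥ 1, ℓ+m = n−1} G(ℓ)G(m). -/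
/-- Two cells of ℤ² are adjacent if they differ by exactly 1 in exactly one coordinate. -/
def Adj (a b : ℤ × ℤ) : Prop :=
  (a.1 = b.1 ∧ (a.2 - b.2).natAbs = 1) ∨ (a.2 = b.2 ∧ (a.1 - b.1).natAbs = 1)

/-- A polyomino is a finite nonempty edge-connected set of cells of ℤ². -/
def IsPolyomino (P : Finset (ℤ × ℤ)) : Prop :=
  P.Nonempty ∧ ∀ a ∈ P, ∀ b ∈ P,
    Relation.ReflTransGen (fun x y => x ∈ P ∧ y ∈ P ∧ Adj x y) a b

/-- Translate a set of cells by a vector. -/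
def translateCells (v : ℤ × ℤ) (P : Finset (ℤ × ℤ)) : Finset (ℤ × ℤ) :=
  P.image (· + v)

/-- The number of translation-equivalence classes of polyominoes with `n` cells. -/
noncomputable def polyA (n : ℕ) : ℕ :=
  Nat.card (Quot (fun (P Q : {P : Finset (ℤ × ℤ) // IsPolyomino P ∧ P.card = n}) =>
    ∃ v : ℤ × ℤ, translateCells v P.1 = Q.1))

/-- A marked cell `c = (x, y)` of `P` is of Type (A) if none of
`(x−1, y−1)`, `(x, y−1)`, `(x+1, y−1)` belongs to `P`. -/
def TypeA (P : Finset (ℤ × ℤ)) (c : ℤ × ℤ) : Prop :=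
  (c.1 - 1, c.2 - 1) ∉ P ∧ (c.1, c.2 - 1) ∉ P ∧ (c.1 + 1, c.2 - 1) ∉ P

/-- A marked cell `c = (x, y)` of `P` is of Type (B) if additionally
`(x−1, y)` does not belong to `P`. -/
def TypeB (P : Finset (ℤ × ℤ)) (c : ℤ × ℤ) : Prop :=
  TypeA P c ∧ (c.1 - 1, c.2) ∉ P

/-- The number of translation-equivalence classes of pairs `(P, c)` of a polyomino `P`
with `n` cells and a marked cell `c ∈ P` of Type (A). -/
noncomputable def polyf (n : ℕ) : ℕ :=
  Nat.card (Quot (fun (p q : {p : Finset (ℤ × ℤ) × (ℤ × ℤ) //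
      IsPolyomino p.1 ∧ p.1.card = n ∧ p.2 ∈ p.1 ∧ TypeA p.1 p.2}) =>
    ∃ v : ℤ × ℤ, translateCells v p.1.1 = q.1.1 ∧ p.1.2 + v = q.1.2))

/-- The number of translation-equivalence classes of pairs `(P, c)` of a polyomino `P`
with `n` cells and a marked cell `c ∈ P` of Type (B). -/
noncomputable def polyg (n : ℕ) : ℕ :=
  Nat.card (Quot (fun (p q : {p : Finset (ℤ × ℤ) × (ℤ × ℤ) //
      IsPolyomino p.1 ∧ p.1.card = n ∧ p.2 ∈ p.1 ∧ TypeB p.1 p.2}) =>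
    ∃ v : ℤ × ℤ, translateCells v p.1.1 = q.1.1 ∧ p.1.2 + v = q.1.2))

/-!
Translating the mark to the origin identifies `polyg n` with the number of polyominoes with `n`
cells having a Type (B) cell at the origin, and likewise for Type (A). These are decomposed by
deleting cells next to the origin.

A Type (B) origin can only have the neighbours `(0, 1)` and `(1, 0)`. If `(1, 0)` is absent,
deleting the origin leaves a polyomino of size `n - 1` with a Type (A) cell at `(0, 1)`; if only
`(1, 0)` is present, one which after a diagonal reflection has a Type (B) cell at `(1, 0)`; if both
are, it leaves the component of `(1, 0)` avoiding `(0, 1)` and the rest, and after reflections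
both carry a Type (B) cell. A Type (A) origin is of Type (B) unless `(-1, 0)` is present; then the
component of the origin avoiding `(-1, 0)` and the rotated rest both carry Type (B) cells.

The pieces determine the polyomino, so these decompositions are injective and give the
recurrences of `F` and `G` as inequalities; strong induction then bounds the counts.
-/

open Finset Relation

abbrev Cell : Type := ℤ × ℤ

theorem Adj.symm {a b : Cell} (h : Adj a b) : Adj b a := by
  unfold Adj at *; omega

def Linked (S : Finset Cell) : Cell → Cell → Prop :=
  ReflTransGen fun x y => x ∈ S ∧ y ∈ S ∧ Adj x y

namespace Linked

variable {S : Finset Cell} {a b c : Cell}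

theorem symm (h : Linked S a b) : Linked S b a :=
  ReflTransGen.mono (fun _ _ ⟨hx, hy, hxy⟩ => ⟨hy, hx, hxy.symm⟩) _ _ (ReflTransGen.swap _ _ h)

theorem trans (hab : Linked S a b) (hbc : Linked S b c) : Linked S a c :=
  ReflTransGen.trans hab hbc

theorem map (e : Cell ≃ Cell) (he : ∀ x y, Adj x y → Adj (e x) (e y)) (h : Linked S a b) :
    Linked (S.map e.toEmbedding) (e a) (e b) :=
  h.lift e fun x y ⟨hx, hy, hxy⟩ => ⟨mem_map_of_mem _ hx, mem_map_of_mem _ hy, he x y hxy⟩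

end Linked

theorem isPolyomino_of_linked {S : Finset Cell} {b : Cell} (hb : b ∈ S)
    (h : ∀ z ∈ S, Linked S b z) : IsPolyomino S :=
  ⟨⟨b, hb⟩, fun x hx y hy => (h x hx).symm.trans (h y hy)⟩

open scoped Classical in
noncomputable def component (S : Finset Cell) (a : Cell) : Finset Cell :=
  {b ∈ S | Linked S a b}

section Component

variable {S : Finset Cell} {a b c : Cell}

theorem mem_component : b ∈ component S a ↔ b ∈ S ∧ Linked S a b := by
  classical
  simp [component]

theorem component_subset : component S a ⊆ S := fun _ hb => (mem_component.1 hb).1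

theorem mem_component_self (ha : a ∈ S) : a ∈ component S a :=
  mem_component.2 ⟨ha, .refl⟩

theorem mem_component_of_adj (hb : b ∈ component S a) (hc : c ∈ S) (hbc : Adj b c) :
    c ∈ component S a :=
  have ⟨hbS, hab⟩ := mem_component.1 hb
  mem_component.2 ⟨hc, hab.tail ⟨hbS, hc, hbc⟩⟩

theorem Linked.component (h : Linked S a b) : Linked (component S a) a b := by
  induction h with
  | refl => exact .refl
  | tail hab hbc ih =>
    exact ih.tail ⟨mem_component.2 ⟨hbc.1, hab⟩, mem_component.2 ⟨hbc.2.1, hab.tail hbc⟩, hbc.2.2⟩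

theorem isPolyomino_component (ha : a ∈ S) : IsPolyomino (component S a) :=
  isPolyomino_of_linked (mem_component_self ha) fun _ hz => (mem_component.1 hz).2.component

end Component

namespace IsPolyomino

variable {P : Finset Cell}

theorem subset_of_adj_closed {K : Finset Cell} (hP : IsPolyomino P) {z : Cell} (hzP : z ∈ P)
    (hzK : z ∈ K) (hK : ∀ x ∈ K, ∀ y ∈ P, Adj x y → y ∈ K) : P ⊆ K := by
  intro b hb
  induction hP.2 z hzP b hb with
  | refl => exact hzK
  | tail _ hstep ih => exact hK _ (ih hstep.1) _ hstep.2.1 hstep.2.2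

theorem exists_adj (hP : IsPolyomino P) {a : Cell} (ha : a ∈ P) (h : 2 ≤ P.card) :
    ∃ y ∈ P, Adj a y := by
  obtain ⟨b, hb, hba⟩ := exists_mem_ne h a
  obtain hab | ⟨y, ⟨-, hy, hay⟩, -⟩ := (hP.2 a ha b hb).cases_head
  · exact absurd hab.symm hba
  · exact ⟨y, hy, hay⟩

theorem sdiff {X : Finset Cell} {b : Cell} (hP : IsPolyomino P) (hb : b ∈ P) (hbX : b ∉ X)
    (hX : ∀ x ∈ X, ∀ y ∈ P, Adj x y → y ∈ X ∨ y = b) : IsPolyomino (P \ X) := by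
  have hbS : b ∈ P \ X := mem_sdiff.2 ⟨hb, hbX⟩
  -- `X` together with the component of `b` in `P \ X` is closed under adjacency in `P`.
  have hcover : P ⊆ X ∪ component (P \ X) b := by
    refine hP.subset_of_adj_closed hb (mem_union_right _ (mem_component_self hbS)) ?_
    intro x hx y hy hxy
    by_cases hyX : y ∈ X
    · exact mem_union_left _ hyX
    refine mem_union_right _ ?_
    rcases mem_union.1 hx with hx | hx
    · obtain hyX' | rfl := hX x hx y hy hxy
      · exact absurd hyX' hyX
      · exact mem_component_self hbS
    · exact mem_component_of_adj hx (mem_sdiff.2 ⟨hy, hyX⟩) hxy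
  refine isPolyomino_of_linked hbS fun z hz => ?_
  obtain ⟨hzP, hzX⟩ := mem_sdiff.1 hz
  exact (mem_component.1 ((mem_union.1 (hcover hzP)).resolve_left hzX)).2

theorem erase {c u : Cell} (hP : IsPolyomino P) (hu : u ∈ P) (huc : u ≠ c)
    (h : ∀ y ∈ P, Adj c y → y = u) : IsPolyomino (P.erase c) := by
  rw [← sdiff_singleton_eq_erase]
  refine hP.sdiff hu (by simpa using huc) fun x hx y hy hxy => .inr (h y hy ?_)
  rwa [mem_singleton.1 hx] at hxy

theorem map (hP : IsPolyomino P) (e : Cell ≃ Cell) (he : ∀ x y, Adj x y → Adj (e x) (e y)) :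
    IsPolyomino (P.map e.toEmbedding) := by
  obtain ⟨⟨w, hw⟩, hlink⟩ := hP
  refine isPolyomino_of_linked (mem_map_of_mem _ hw) fun z hz => ?_
  obtain ⟨x, hx, rfl⟩ := mem_map.1 hz
  exact Linked.map e he (hlink w hw x hx)

end IsPolyomino

theorem adj_add_right (v : Cell) {a b : Cell} (h : Adj a b) : Adj (a + v) (b + v) := by
  unfold Adj at *; simp only [Prod.fst_add, Prod.snd_add]; omega

-- These send `(1, 0)`, `(0, 1)` and `(-1, 0)` respectively to the origin, where a piece of a
-- decomposition below gets its new mark.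
@[simps]
def diagFlip : Cell ≃ Cell where
  toFun p := (p.2, p.1 - 1)
  invFun p := (p.2 + 1, p.1)
  left_inv _ := by simp
  right_inv _ := by simp

@[simps]
def mirror : Cell ≃ Cell where
  toFun p := (-p.1, p.2 - 1)
  invFun p := (-p.1, p.2 + 1)
  left_inv _ := by simp
  right_inv _ := by simp

@[simps]
def rotate : Cell ≃ Cell where
  toFun p := (p.2, -p.1 - 1)
  invFun p := (-p.2 - 1, p.1)
  left_inv _ := by simp
  right_inv _ := by simp

theorem adj_diagFlip {a b : Cell} (h : Adj a b) : Adj (diagFlip a) (diagFlip b) := by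
  unfold Adj at *; simp only [diagFlip_apply]; omega

theorem adj_mirror {a b : Cell} (h : Adj a b) : Adj (mirror a) (mirror b) := by
  unfold Adj at *; simp only [mirror_apply]; omega

theorem adj_rotate {a b : Cell} (h : Adj a b) : Adj (rotate a) (rotate b) := by
  unfold Adj at *; simp only [rotate_apply]; omega

theorem Finset.map_symm_map_equiv {α β : Type*} (e : α ≃ β) (s : Finset α) :
    (s.map e.toEmbedding).map e.symm.toEmbedding = s :=
  e.finsetCongr.symm_apply_apply s

theorem typeA_zero {P : Finset Cell} :
    TypeA P 0 ↔ (-1, -1) ∉ P ∧ (0, -1) ∉ P ∧ (1, -1) ∉ P := by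
  simp [TypeA]

theorem typeB_zero {P : Finset Cell} :
    TypeB P 0 ↔ ((-1, -1) ∉ P ∧ (0, -1) ∉ P ∧ (1, -1) ∉ P) ∧ (-1, 0) ∉ P := by
  simp [TypeB, TypeA]

def IsPinned (T : Finset Cell → Cell → Prop) (P : Finset Cell) : Prop :=
  IsPolyomino P ∧ (0 : Cell) ∈ P ∧ T P 0

abbrev Pinned (T : Finset Cell → Cell → Prop) (n : ℕ) : Type :=
  {P : Finset Cell // IsPinned T P ∧ P.card = n}

theorem Pinned.subsingleton {T : Finset Cell → Cell → Prop} {n : ℕ} (hn : n ≤ 1) :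
    Subsingleton (Pinned T n) := by
  have key (P : Pinned T n) : P.1 = {0} :=
    eq_singleton_iff_unique_mem.2
      ⟨P.2.1.2.1, fun x hx => card_le_one.1 (P.2.2.le.trans hn) x hx 0 P.2.1.2.1⟩
  exact ⟨fun P Q => Subtype.ext ((key P).trans (key Q).symm)⟩

section Translation

variable {P : Finset Cell}

theorem translateCells_eq_map (v : Cell) (P : Finset Cell) :
    translateCells v P = P.map (Equiv.addRight v).toEmbedding := by
  rw [translateCells, map_eq_image]
  rfl

theorem translateCells_translateCells (v w : Cell) (P : Finset Cell) :
    translateCells w (translateCells v P) = translateCells (v + w) P := by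
  simp only [translateCells, image_image, Function.comp_def, add_assoc]

theorem translateCells_zero (P : Finset Cell) : translateCells 0 P = P := by
  simp [translateCells]

theorem add_mem_translateCells (v a : Cell) : a + v ∈ translateCells v P ↔ a ∈ P := by
  simp [translateCells]

theorem typeB_translateCells {c : Cell} (v : Cell) (h : TypeB P c) :
    TypeB (translateCells v P) (c + v) := by
  have shift {a b : Cell} (ha : a ∉ P) (hb : b = a + v) : b ∉ translateCells v P :=
    hb ▸ (add_mem_translateCells v a).not.2 ha
  obtain ⟨⟨h₁, h₂, h₃⟩, h₄⟩ := h
  exact ⟨⟨shift h₁ (by ext <;> simp [sub_add_eq_add_sub]),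
    shift h₂ (by ext <;> simp [sub_add_eq_add_sub]),
    shift h₃ (by ext <;> simp [sub_add_eq_add_sub, add_right_comm])⟩,
    shift h₄ (by ext <;> simp [sub_add_eq_add_sub])⟩

noncomputable def pinMarked (n : ℕ) (p : {p : Finset Cell × Cell //
      IsPolyomino p.1 ∧ p.1.card = n ∧ p.2 ∈ p.1 ∧ TypeB p.1 p.2}) : Pinned TypeB n :=
  ⟨translateCells (-p.1.2) p.1.1,
    ⟨translateCells_eq_map _ _ ▸ p.2.1.map _ fun _ _ => adj_add_right _,
      by simpa using (add_mem_translateCells (-p.1.2) _).2 p.2.2.2.1,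
      by simpa using typeB_translateCells (-p.1.2) p.2.2.2.2⟩,
    by rw [translateCells_eq_map, card_map, p.2.2.1]⟩

theorem polyg_eq_card (n : ℕ) : polyg n = Nat.card (Pinned TypeB n) := by
  refine Nat.card_eq_of_bijective (Quot.lift (pinMarked n) ?_) ⟨?_, ?_⟩
  · rintro p q ⟨v, hPQ, hcv⟩
    refine Subtype.ext ?_
    simp only [pinMarked, ← hPQ, ← hcv, translateCells_translateCells, neg_add_rev,
      add_neg_cancel_left]
  · rintro ⟨p⟩ ⟨q⟩ h
    refine Quot.sound ⟨q.1.2 - p.1.2, ?_, by abel⟩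
    have := congrArg (translateCells q.1.2 ∘ Subtype.val) h
    simpa [pinMarked, translateCells_translateCells, neg_add_eq_sub, translateCells_zero]
      using this
  · intro P
    exact ⟨Quot.mk _ ⟨(P.1, 0), P.2.1.1, P.2.2, P.2.1.2.1, P.2.1.2.2⟩,
      Subtype.ext (by simp [pinMarked, translateCells_zero])⟩

end Translation

section Decomposition

variable {P : Finset Cell}

theorem IsPinned.eq_of_adj_zero (hP : IsPinned TypeB P) {y : Cell} (hy : y ∈ P)
    (h : Adj 0 y) : y = (0, 1) ∨ y = (1, 0) := by
  obtain ⟨-, -, ⟨-, h₂, -⟩, h₄⟩ := hP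
  obtain ⟨y₁, y₂⟩ := y
  have : (y₁ = 0 ∧ (y₂ = 1 ∨ y₂ = -1)) ∨ (y₂ = 0 ∧ (y₁ = 1 ∨ y₁ = -1)) := by
    unfold Adj at h; simp only [Prod.fst_zero, Prod.snd_zero] at h; omega
  rcases this with ⟨rfl, rfl | rfl⟩ | ⟨rfl, rfl | rfl⟩
  · simp
  · exact absurd hy (by simpa using h₂)
  · simp
  · exact absurd hy (by simpa using h₄)

theorem isPinned_shift_erase (hP : IsPinned TypeB P) (hn : 2 ≤ P.card)
    (hr : ((1, 0) : Cell) ∉ P) :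
    IsPinned TypeA ((P.erase 0).map (Equiv.addRight ((0, -1) : Cell)).toEmbedding) := by
  have huniq (y : Cell) (hy : y ∈ P) (h : Adj 0 y) : y = (0, 1) :=
    (hP.eq_of_adj_zero hy h).resolve_right (by rintro rfl; exact hr hy)
  obtain ⟨y, hy, h0y⟩ := hP.1.exists_adj hP.2.1 hn
  have hu : ((0, 1) : Cell) ∈ P := huniq y hy h0y ▸ hy
  refine ⟨(hP.1.erase hu (by decide) huniq).map _ fun _ _ => adj_add_right _, ?_, ?_⟩
  · simp [Prod.ext_iff, hu]
  · have hl := (typeB_zero.1 hP.2.2).2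
    rw [typeA_zero]
    simp only [mem_map_equiv, Equiv.addRight_symm_apply]
    norm_num
    exact ⟨hl, hr⟩

theorem isPinned_diagFlip_erase (hP : IsPinned TypeB P) (hr : ((1, 0) : Cell) ∈ P)
    (hu : ((0, 1) : Cell) ∉ P) : IsPinned TypeB ((P.erase 0).map diagFlip.toEmbedding) := by
  have huniq (y : Cell) (hy : y ∈ P) (h : Adj 0 y) : y = (1, 0) :=
    (hP.eq_of_adj_zero hy h).resolve_left (by rintro rfl; exact hu hy)
  refine ⟨(hP.1.erase hr (by decide) huniq).map _ fun _ _ => adj_diagFlip, ?_, ?_⟩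
  · simp [Prod.ext_iff, hr]
  · obtain ⟨⟨-, h₂, h₃⟩, -⟩ := typeB_zero.1 hP.2.2
    rw [typeB_zero]
    simp only [mem_map_equiv, diagFlip_symm_apply]
    norm_num
    exact ⟨⟨h₂, hu⟩, h₃⟩

noncomputable def rightPart (P : Finset Cell) : Finset Cell :=
  component ((P.erase 0).erase (0, 1)) (1, 0)

noncomputable def upPart (P : Finset Cell) : Finset Cell :=
  P \ insert 0 (rightPart P)

theorem rightPart_subset : rightPart P ⊆ P :=
  component_subset.trans ((erase_subset _ _).trans (erase_subset _ _))

theorem zero_notMem_rightPart : (0 : Cell) ∉ rightPart P := fun h => by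
  simpa using component_subset h

theorem up_notMem_rightPart : ((0, 1) : Cell) ∉ rightPart P := fun h => by
  simpa using component_subset h

theorem right_mem_rightPart (hr : ((1, 0) : Cell) ∈ P) : ((1, 0) : Cell) ∈ rightPart P :=
  mem_component_self (by simp [Prod.ext_iff, hr])

theorem mem_rightPart_of_adj {x y : Cell} (hx : x ∈ rightPart P) (hy : y ∈ P) (hy0 : y ≠ 0)
    (hyu : y ≠ (0, 1)) (hxy : Adj x y) : y ∈ rightPart P :=
  mem_component_of_adj hx (by simp [hy, hy0, hyu]) hxy

theorem isPinned_diagFlip_rightPart (hP : IsPinned TypeB P) (hr : ((1, 0) : Cell) ∈ P) :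
    IsPinned TypeB ((rightPart P).map diagFlip.toEmbedding) := by
  refine ⟨(isPolyomino_component ?_).map _ fun _ _ => adj_diagFlip, ?_, ?_⟩
  · simp [Prod.ext_iff, hr]
  · simpa using right_mem_rightPart hr
  · obtain ⟨⟨-, h₂, h₃⟩, -⟩ := typeB_zero.1 hP.2.2
    rw [typeB_zero]
    simp only [mem_map_equiv, diagFlip_symm_apply]
    norm_num
    exact ⟨⟨fun h => h₂ (rightPart_subset h), zero_notMem_rightPart, up_notMem_rightPart⟩,
      fun h => h₃ (rightPart_subset h)⟩

theorem isPinned_mirror_upPart (hP : IsPinned TypeB P) (hr : ((1, 0) : Cell) ∈ P)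
    (hu : ((0, 1) : Cell) ∈ P) : IsPinned TypeB ((upPart P).map mirror.toEmbedding) := by
  have hX (x : Cell) (hx : x ∈ insert 0 (rightPart P)) (y : Cell) (hy : y ∈ P) (hxy : Adj x y) :
      y ∈ insert 0 (rightPart P) ∨ y = (0, 1) := by
    by_cases hy0 : y = 0
    · exact .inl (hy0 ▸ mem_insert_self _ _)
    by_cases hyu : y = (0, 1)
    · exact .inr hyu
    refine .inl (mem_insert_of_mem ?_)
    obtain rfl | hx := mem_insert.1 hx
    · exact (hP.eq_of_adj_zero hy hxy).resolve_left hyu ▸ right_mem_rightPart hr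
    · exact mem_rightPart_of_adj hx hy hy0 hyu hxy
  have hu' : ((0, 1) : Cell) ∉ insert 0 (rightPart P) := by
    simp [Prod.ext_iff, up_notMem_rightPart]
  refine ⟨(hP.1.sdiff hu hu' hX).map _ fun _ _ => adj_mirror, ?_, ?_⟩
  · simpa [upPart] using mem_sdiff.2 ⟨hu, hu'⟩
  · have h₄ := (typeB_zero.1 hP.2.2).2
    rw [typeB_zero]
    simp only [mem_map_equiv, mirror_symm_apply, upPart, mem_sdiff, mem_insert, not_and,
      not_or, not_not]
    norm_num
    exact ⟨⟨fun _ => right_mem_rightPart hr, fun h => absurd h h₄⟩, fun h =>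
      mem_rightPart_of_adj (right_mem_rightPart hr) h (by decide) (by decide) (by simp [Adj])⟩

theorem card_upPart_add_card_rightPart (h0 : (0 : Cell) ∈ P) :
    (upPart P).card + (rightPart P).card + 1 = P.card := by
  rw [add_assoc, ← card_insert_of_notMem zero_notMem_rightPart]
  exact card_sdiff_add_card_eq_card (insert_subset h0 rightPart_subset)

theorem insert_upPart_union_rightPart (h0 : (0 : Cell) ∈ P) :
    insert 0 (upPart P ∪ rightPart P) = P := by
  rw [upPart, ← union_insert, sdiff_union_of_subset (insert_subset h0 rightPart_subset)]

noncomputable def basePart (P : Finset Cell) : Finset Cell :=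
  component (P.erase (-1, 0)) 0

noncomputable def leftPart (P : Finset Cell) : Finset Cell :=
  P \ basePart P

theorem basePart_subset : basePart P ⊆ P :=
  component_subset.trans (erase_subset _ _)

theorem left_notMem_basePart : ((-1, 0) : Cell) ∉ basePart P := fun h => by
  simpa using component_subset h

theorem zero_mem_basePart (h0 : (0 : Cell) ∈ P) : (0 : Cell) ∈ basePart P :=
  mem_component_self (by simp [Prod.ext_iff, h0])

theorem mem_basePart_of_adj {x y : Cell} (hx : x ∈ basePart P) (hy : y ∈ P)
    (hye : y ≠ (-1, 0)) (hxy : Adj x y) : y ∈ basePart P :=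
  mem_component_of_adj hx (by simp [hy, hye]) hxy

theorem isPinned_basePart (hP : IsPinned TypeA P) : IsPinned TypeB (basePart P) := by
  have h0 := zero_mem_basePart hP.2.1
  refine ⟨isPolyomino_component (component_subset h0), h0, ?_⟩
  obtain ⟨h₁, h₂, h₃⟩ := typeA_zero.1 hP.2.2
  exact typeB_zero.2 ⟨⟨fun h => h₁ (basePart_subset h), fun h => h₂ (basePart_subset h),
    fun h => h₃ (basePart_subset h)⟩, left_notMem_basePart⟩

theorem isPinned_rotate_leftPart (hP : IsPinned TypeA P) (he : ((-1, 0) : Cell) ∈ P) :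
    IsPinned TypeB ((leftPart P).map rotate.toEmbedding) := by
  have hX (x : Cell) (hx : x ∈ basePart P) (y : Cell) (hy : y ∈ P) (hxy : Adj x y) :
      y ∈ basePart P ∨ y = (-1, 0) :=
    or_iff_not_imp_right.2 fun hye => mem_basePart_of_adj hx hy hye hxy
  refine ⟨(hP.1.sdiff he left_notMem_basePart hX).map _ fun _ _ => adj_rotate, ?_, ?_⟩
  · simpa [leftPart] using mem_sdiff.2 ⟨he, left_notMem_basePart⟩
  · obtain ⟨h₁, h₂, -⟩ := typeA_zero.1 hP.2.2
    rw [typeB_zero]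
    simp only [mem_map_equiv, rotate_symm_apply, leftPart, mem_sdiff, not_and, not_not]
    norm_num
    have h0 := zero_mem_basePart hP.2.1
    exact ⟨⟨fun h => absurd h h₂, fun _ => h0, fun h =>
      mem_basePart_of_adj h0 h (by decide) (by simp [Adj])⟩, fun h => absurd h h₁⟩

theorem card_basePart_add_card_leftPart : (basePart P).card + (leftPart P).card = P.card := by
  rw [add_comm]
  exact card_sdiff_add_card_eq_card basePart_subset

theorem basePart_union_leftPart : basePart P ∪ leftPart P = P :=
  union_sdiff_of_subset basePart_subset

end Decomposition

abbrev SplitPairs (m : ℕ) : Type :=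
  Σ l : Ioo 0 m, Pinned TypeB l × Pinned TypeB (m - l)

def SplitPairs.ofPinned {m : ℕ} {Q R : Finset Cell} (hQ : IsPinned TypeB Q)
    (hR : IsPinned TypeB R) (h : Q.card + R.card = m) : SplitPairs m :=
  have hQ₀ := card_pos.2 ⟨0, hQ.2.1⟩
  have hR₀ := card_pos.2 ⟨0, hR.2.1⟩
  ⟨⟨Q.card, mem_Ioo.2 ⟨hQ₀, by omega⟩⟩, ⟨Q, hQ, rfl⟩, ⟨R, hR, show R.card = m - Q.card by omega⟩⟩

noncomputable def decompB {n : ℕ} (hn : 2 ≤ n) (P : Pinned TypeB n) :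
    Pinned TypeA (n - 1) ⊕ Pinned TypeB (n - 1) ⊕ SplitPairs (n - 1) :=
  if hr : ((1, 0) : Cell) ∈ P.1 then
    if hu : ((0, 1) : Cell) ∈ P.1 then
      .inr <| .inr <| .ofPinned (isPinned_mirror_upPart P.2.1 hr hu)
        (isPinned_diagFlip_rightPart P.2.1 hr) (by
          have := card_upPart_add_card_rightPart P.2.1.2.1
          simp only [card_map]; omega)
    else .inr <| .inl ⟨_, isPinned_diagFlip_erase P.2.1 hr hu, by
      rw [card_map, card_erase_of_mem P.2.1.2.1, P.2.2]⟩
  else .inl ⟨_, isPinned_shift_erase P.2.1 (P.2.2.symm ▸ hn) hr, by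
      rw [card_map, card_erase_of_mem P.2.1.2.1, P.2.2]⟩

def assembleB {m : ℕ} : Pinned TypeA m ⊕ Pinned TypeB m ⊕ SplitPairs m → Finset Cell
  | .inl Q => insert 0 (Q.1.map (Equiv.addRight ((0, -1) : Cell)).symm.toEmbedding)
  | .inr (.inl Q) => insert 0 (Q.1.map diagFlip.symm.toEmbedding)
  | .inr (.inr ⟨_, Q, R⟩) =>
    insert 0 (Q.1.map mirror.symm.toEmbedding ∪ R.1.map diagFlip.symm.toEmbedding)

theorem assembleB_decompB {n : ℕ} (hn : 2 ≤ n) (P : Pinned TypeB n) :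
    assembleB (decompB hn P) = P.1 := by
  unfold decompB
  split_ifs <;> simp only [assembleB, SplitPairs.ofPinned, map_symm_map_equiv,
    insert_upPart_union_rightPart P.2.1.2.1, insert_erase P.2.1.2.1]

theorem decompB_injective {n : ℕ} (hn : 2 ≤ n) : Function.Injective (decompB hn) :=
  fun P Q h => Subtype.ext <| by rw [← assembleB_decompB hn P, h, assembleB_decompB]

noncomputable def decompA {n : ℕ} (P : Pinned TypeA n) : Pinned TypeB n ⊕ SplitPairs n :=
  if he : ((-1, 0) : Cell) ∈ P.1 then
    .inr <| .ofPinned (isPinned_basePart P.2.1) (isPinned_rotate_leftPart P.2.1 he) (by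
      rw [card_map, card_basePart_add_card_leftPart, P.2.2])
  else .inl ⟨P.1, ⟨P.2.1.1, P.2.1.2.1, P.2.1.2.2, by simpa using he⟩, P.2.2⟩

def assembleA {m : ℕ} : Pinned TypeB m ⊕ SplitPairs m → Finset Cell
  | .inl Q => Q.1
  | .inr ⟨_, Q, R⟩ => Q.1 ∪ R.1.map rotate.symm.toEmbedding

theorem assembleA_decompA {n : ℕ} (P : Pinned TypeA n) : assembleA (decompA P) = P.1 := by
  unfold decompA
  split_ifs <;> simp only [assembleA, SplitPairs.ofPinned, map_symm_map_equiv,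
    basePart_union_leftPart]

theorem decompA_injective {n : ℕ} : Function.Injective (decompA (n := n)) :=
  fun P Q h => Subtype.ext <| by rw [← assembleA_decompA P, h, assembleA_decompA]

theorem finite_pinned (n : ℕ) : Finite (Pinned TypeA n) ∧ Finite (Pinned TypeB n) := by
  induction n using Nat.strong_induction_on with
  | _ n ih =>
  obtain hn | hn := le_or_gt n 1
  · have := Pinned.subsingleton (T := TypeA) hn
    have := Pinned.subsingleton (T := TypeB) hn
    exact ⟨inferInstance, inferInstance⟩
  have hB (l : ℕ) (hl : l < n) : Finite (Pinned TypeB l) := (ih l hl).2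
  have hsplit (m : ℕ) (hm : m ≤ n) : Finite (SplitPairs m) := by
    have (l : Ioo 0 m) : Finite (Pinned TypeB l × Pinned TypeB (m - l)) := by
      have := mem_Ioo.1 l.2
      have := hB l (by omega)
      have := hB (m - l) (by omega)
      infer_instance
    infer_instance
  have := (ih (n - 1) (by omega)).1
  have := (ih (n - 1) (by omega)).2
  have := hsplit (n - 1) (by omega)
  have hBn := Finite.of_injective _ (decompB_injective (by omega : 2 ≤ n))
  have := hsplit n le_rfl
  exact ⟨Finite.of_injective _ decompA_injective, hBn⟩

instance (n : ℕ) : Finite (Pinned TypeA n) := (finite_pinned n).1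

instance (n : ℕ) : Finite (Pinned TypeB n) := (finite_pinned n).2

theorem card_splitPairs (m : ℕ) : Nat.card (SplitPairs m) =
    ∑ l ∈ Ioo 0 m, Nat.card (Pinned TypeB l) * Nat.card (Pinned TypeB (m - l)) := by
  rw [Nat.card_sigma, ← sum_coe_sort (Ioo 0 m)]
  simp only [Nat.card_prod]

theorem card_splitPairs_le {m : ℕ} {G : ℕ → ℕ}
    (hG : ∀ l, 0 < l → l < m → Nat.card (Pinned TypeB l) ≤ G l) :
    Nat.card (SplitPairs m) ≤ ∑ l ∈ Ioo 0 m, G l * G (m - l) := by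
  rw [card_splitPairs]
  refine sum_le_sum fun l hl => ?_
  obtain ⟨hl₀, hlm⟩ := mem_Ioo.1 hl
  exact Nat.mul_le_mul (hG l hl₀ hlm) (hG (m - l) (by omega) (by omega))

theorem card_pinnedB_le {n : ℕ} (hn : 2 ≤ n) : Nat.card (Pinned TypeB n) ≤
    Nat.card (Pinned TypeA (n - 1)) + Nat.card (Pinned TypeB (n - 1)) +
      Nat.card (SplitPairs (n - 1)) := by
  have := Nat.card_le_card_of_injective _ (decompB_injective hn)
  rwa [Nat.card_sum, Nat.card_sum, ← add_assoc] at this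

theorem card_pinnedA_le (n : ℕ) :
    Nat.card (Pinned TypeA n) ≤ Nat.card (Pinned TypeB n) + Nat.card (SplitPairs n) := by
  have := Nat.card_le_card_of_injective _ (decompA_injective (n := n))
  rwa [Nat.card_sum] at this

theorem card_pinned_le (F G : ℕ → ℕ) (hF1 : F 1 = 1) (hG1 : G 1 = 1)
    (hFrec : ∀ n, 2 ≤ n → F n = G n + ∑ ℓ ∈ Ioo 0 n, G ℓ * G (n - ℓ))
    (hGrec : ∀ n, 2 ≤ n →
      G n = F (n - 1) + G (n - 1) + ∑ ℓ ∈ Ioo 0 (n - 1), G ℓ * G (n - 1 - ℓ)) (n : ℕ)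
    (hn : 1 ≤ n) : Nat.card (Pinned TypeA n) ≤ F n ∧ Nat.card (Pinned TypeB n) ≤ G n := by
  induction n using Nat.strong_induction_on with
  | _ n ih =>
  obtain rfl | hn := eq_or_lt_of_le hn
  · rw [hF1, hG1]
    exact ⟨Finite.card_le_one_iff_subsingleton.2 (Pinned.subsingleton le_rfl),
      Finite.card_le_one_iff_subsingleton.2 (Pinned.subsingleton le_rfl)⟩
  have hB_lt (l : ℕ) (hl₀ : 0 < l) (hl : l < n) : Nat.card (Pinned TypeB l) ≤ G l :=
    (ih l hl hl₀).2
  have hB : Nat.card (Pinned TypeB n) ≤ G n := by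
    rw [hGrec n hn]
    refine (card_pinnedB_le hn).trans (add_le_add (add_le_add ?_ ?_)
      (card_splitPairs_le fun l hl₀ hl => hB_lt l hl₀ (by omega)))
    · exact (ih (n - 1) (by omega) (by omega)).1
    · exact (ih (n - 1) (by omega) (by omega)).2
  refine ⟨?_, hB⟩
  rw [hFrec n hn]
  exact (card_pinnedA_le n).trans (add_le_add hB (card_splitPairs_le hB_lt))

theorem stmt_1_general (F G : ℕ → ℕ)
    (hF1 : F 1 = 1) (hG1 : G 1 = 1)
    (hFrec : ∀ n, 2 ≤ n → F n = G n + ∑ ℓ ∈ Finset.Ioo 0 n, G ℓ * G (n - ℓ))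
    (hGrec : ∀ n, 2 ≤ n →
      G n = F (n - 1) + G (n - 1) + ∑ ℓ ∈ Finset.Ioo 0 (n - 1), G ℓ * G (n - 1 - ℓ)) :
    ∀ n : ℕ, 1 ≤ n → polyg n ≤ G n := by
  intro n hn
  rw [polyg_eq_card]
  exact (card_pinned_le F G hF1 hG1 hFrec hGrec n hn).2

theorem stmt_1 (F G : ℕ → ℕ)
    (hF0 : F 0 = 1) (hF1 : F 1 = 1) (hG0 : G 0 = 1) (hG1 : G 1 = 1)
    (hFrec : ∀ n, 2 ≤ n → F n = G n + ∑ ℓ ∈ Finset.Ioo 0 n, G ℓ * G (n - ℓ))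
    (hGrec : ∀ n, 2 ≤ n →
      G n = F (n - 1) + G (n - 1) + ∑ ℓ ∈ Finset.Ioo 0 (n - 1), G ℓ * G (n - 1 - ℓ)) :
    ∀ n : ℕ, 1 ≤ n → polyg n ≤ G n :=
  stmt_1_general F G hF1 hG1 hFrec hGrec
end

section
/- Let G be the sequence defined by G(0) = G(1) = 1 and G(n) = 2·∑_{m=1}^{n−1} G(m)·G(n−1−m) for n ≥ 2. Then for every real x with 0 < |x| < (√2 − 1)/2, the series ∑_{n≥0} G(n)·xⁿ converges and its sum equals (2x + 1 − √(1 − 4x − 4x²)) / (4x). -/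
/-!
By the recursion, `G (k + 2)` is twice the `k`-th coefficient of the Cauchy product of
`(G (i + 1))ᵢ` with `G`, so the generating function `f(x) = ∑ G(n) xⁿ` satisfies
`f = 1 + x + 2x·(f - 1)·f`, a quadratic whose roots are `((2x + 1) ± √(1 - 4x - 4x²)) / (4x)`.

For `0 < t < (√2 - 1)/2` the map `s ↦ 1 + t + 2t·(s - 1)·s` is increasing on `[1, ∞)` and
fixes the smaller root `genFun t ≥ 1`; it also dominates the step from one partial sum at `t` to
the next, so all partial sums stay below `genFun t` and the series converges absolutely for
`|x| = t`. The sum at `x` is then a root of the quadratic, and `|f(x) - 1| ≤ genFun |x| - 1`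
rules out the larger root (for `x < 0` it is negative, for `x > 0` it exceeds `genFun x`).
-/

open Finset

noncomputable def genFun (x : ℝ) : ℝ :=
  (2 * x + 1 - Real.sqrt (1 - 4 * x - 4 * x ^ 2)) / (4 * x)

structure SatisfiesGRec (x : ℝ) (a : ℕ → ℝ) : Prop where
  zero : a 0 = 1
  one : a 1 = x
  add_two : ∀ k, a (k + 2) = 2 * x * ∑ i ∈ range (k + 1), a (i + 1) * a (k - i)

theorem satisfiesGRec_of_recurrence (G : ℕ → ℕ) (hG0 : G 0 = 1) (hG1 : G 1 = 1)
    (hGrec : ∀ n, 2 ≤ n → G n = 2 * ∑ m ∈ Ico 1 n, G m * G (n - 1 - m)) (x : ℝ) :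
    SatisfiesGRec x fun n => (G n : ℝ) * x ^ n where
  zero := by simp [hG0]
  one := by simp [hG1]
  add_two k := by
    rw [hGrec (k + 2) (by omega), sum_Ico_eq_sum_range, mul_sum]
    push_cast
    rw [mul_sum, sum_mul]
    refine sum_congr rfl fun i hi => ?_
    have hik : i ≤ k := Nat.lt_succ_iff.1 (mem_range.1 hi)
    rw [show k + 1 - (1 + i) = k - i by omega, add_comm 1 i,
      show k + 2 = (i + 1) + (k - i) + 1 by omega]
    ring

theorem sum_range_sum_range_mul_le {R : Type*} [CommSemiring R] [PartialOrder R] [IsOrderedRing R]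
    {f g : ℕ → R} (hf : ∀ n, 0 ≤ f n) (hg : ∀ n, 0 ≤ g n) (N : ℕ) :
    ∑ k ∈ range N, ∑ i ∈ range (k + 1), f i * g (k - i) ≤
      (∑ i ∈ range N, f i) * ∑ j ∈ range N, g j := by
  rw [sum_range_diag_flip N fun i j => f i * g j, sum_mul_sum]
  refine sum_le_sum fun i _ => sum_le_sum_of_subset_of_nonneg (range_mono (N.sub_le i)) ?_
  exact fun j _ _ => mul_nonneg (hf i) (hg j)

theorem norm_tsum_sub_le {E : Type*} [NormedAddCommGroup E] [CompleteSpace E] {f : ℕ → E}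
    (hf : Summable fun n => ‖f n‖) :
    ‖∑' n, f n - f 0‖ ≤ ∑' n, ‖f n‖ - ‖f 0‖ := by
  rw [hf.of_norm.tsum_eq_zero_add, hf.tsum_eq_zero_add, add_sub_cancel_left, add_sub_cancel_left]
  exact norm_tsum_le_tsum_norm ((summable_nat_add_iff 1).2 hf)

namespace SatisfiesGRec

variable {x : ℝ} {a : ℕ → ℝ}

theorem sum_range_add_two_le (h : SatisfiesGRec x a) (hx : 0 ≤ x) (ha : ∀ n, 0 ≤ a n)
    (N : ℕ) :
    ∑ n ∈ range (N + 2), a n ≤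
      1 + x + 2 * x * ((∑ n ∈ range (N + 1), a n - 1) * ∑ n ∈ range (N + 1), a n) := by
  have hshift : ∑ n ∈ range (N + 1), a n - 1 = ∑ i ∈ range N, a (i + 1) := by
    rw [sum_range_succ', h.zero, add_sub_cancel_right]
  have hmono : ∑ n ∈ range N, a n ≤ ∑ n ∈ range (N + 1), a n := by
    rw [sum_range_succ]
    exact le_add_of_nonneg_right (ha N)
  calc ∑ n ∈ range (N + 2), a n
      = 1 + x + 2 * x * ∑ k ∈ range N, ∑ i ∈ range (k + 1), a (i + 1) * a (k - i) := by
        simp only [sum_range_succ' _ (N + 1), sum_range_succ' _ N, h.add_two, h.zero, h.one,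
          mul_sum]
        ring
    _ ≤ 1 + x + 2 * x * ((∑ i ∈ range N, a (i + 1)) * ∑ n ∈ range N, a n) := by
        gcongr
        exact sum_range_sum_range_mul_le (fun i => ha (i + 1)) ha N
    _ ≤ 1 + x + 2 * x * ((∑ i ∈ range N, a (i + 1)) * ∑ n ∈ range (N + 1), a n) := by
        gcongr
        exact sum_nonneg fun i _ => ha (i + 1)
    _ = _ := by rw [hshift]

theorem sum_range_le (h : SatisfiesGRec x a) (hx : 0 ≤ x) (ha : ∀ n, 0 ≤ a n) {L : ℝ}
    (hL1 : 1 ≤ L) (hL : 1 + x + 2 * x * ((L - 1) * L) ≤ L) (N : ℕ) :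
    ∑ n ∈ range N, a n ≤ L := by
  have hsucc : ∀ N, ∑ n ∈ range (N + 1), a n ≤ L := by
    intro N
    induction N with
    | zero => simpa [h.zero] using hL1
    | succ N ih =>
      have h1 : 1 ≤ ∑ n ∈ range (N + 1), a n :=
        h.zero ▸ single_le_sum (fun i _ => ha i) (mem_range.2 N.succ_pos)
      refine (h.sum_range_add_two_le hx ha N).trans (le_trans ?_ hL)
      gcongr
  cases N with
  | zero => simpa using zero_le_one.trans hL1
  | succ N => exact hsucc N

theorem tsum_sub_eq (h : SatisfiesGRec x a) (ha : Summable fun n => ‖a n‖) :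
    ∑' n, a n - (1 + x) = 2 * x * ((∑' n, a n - 1) * ∑' n, a n) := by
  have hS := ha.of_norm.hasSum
  have hshift : HasSum (fun n => a (n + 1)) (∑' n, a n - 1) := by
    have := (hasSum_nat_add_iff' 1).2 hS
    rwa [sum_range_one, h.zero] at this
  have hconv := hasSum_sum_range_mul_of_summable_norm
    ((summable_nat_add_iff 1).2 ha : Summable fun n => ‖a (n + 1)‖) ha
  rw [hshift.tsum_eq] at hconv
  have hshift2 : HasSum (fun n => a (n + 2)) (∑' n, a n - (1 + x)) := by
    have := (hasSum_nat_add_iff' 2).2 hS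
    rwa [sum_range_succ, sum_range_one, h.zero, h.one] at this
  refine hshift2.unique ?_
  simp only [h.add_two]
  exact hconv.mul_left (2 * x)

end SatisfiesGRec

theorem one_sub_four_mul_sub_pos {x : ℝ} (hx : |x| < (Real.sqrt 2 - 1) / 2) :
    0 < 1 - 4 * x - 4 * x ^ 2 := by
  have h2 : Real.sqrt 2 * Real.sqrt 2 = 2 := Real.mul_self_sqrt zero_le_two
  have hsq := mul_self_lt_mul_self (by positivity : 0 ≤ 2 * |x| + 1)
    (by linarith : 2 * |x| + 1 < Real.sqrt 2)
  nlinarith [le_abs_self x, sq_abs x]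

theorem mul_genFun {x : ℝ} (hx : x ≠ 0) :
    4 * x * genFun x = 2 * x + 1 - Real.sqrt (1 - 4 * x - 4 * x ^ 2) :=
  mul_div_cancel₀ _ (by positivity)

theorem genFun_sub_eq {x : ℝ} (hx : x ≠ 0) (hD : 0 ≤ 1 - 4 * x - 4 * x ^ 2) :
    genFun x - (1 + x) = 2 * x * ((genFun x - 1) * genFun x) := by
  have h4 := mul_genFun hx
  set s := Real.sqrt (1 - 4 * x - 4 * x ^ 2)
  have hs : s ^ 2 = 1 - 4 * x - 4 * x ^ 2 := Real.sq_sqrt hD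
  refine mul_left_cancel₀ (by positivity : (8 * x) ≠ 0) ?_
  linear_combination (1 - 4 * x * genFun x + 2 * x + s) * h4 - hs

theorem one_le_genFun {t : ℝ} (ht : 0 < t) (ht' : t ≤ 1 / 2) : 1 ≤ genFun t := by
  rw [genFun, le_div_iff₀ (by positivity)]
  have : Real.sqrt (1 - 4 * t - 4 * t ^ 2) ≤ 1 - 2 * t :=
    Real.sqrt_le_iff.2 ⟨by linarith, by nlinarith⟩
  linarith

theorem eq_genFun_of_sub_eq {x S : ℝ} (hx : x ≠ 0) (hxr : |x| < (Real.sqrt 2 - 1) / 2)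
    (hS : S - (1 + x) = 2 * x * ((S - 1) * S)) (hbound : |S - 1| ≤ genFun |x| - 1) :
    S = genFun x := by
  have hD := one_sub_four_mul_sub_pos hxr
  set s := Real.sqrt (1 - 4 * x - 4 * x ^ 2)
  have hs0 : 0 < s := Real.sqrt_pos.2 hD
  have hdiscrim : discrim (2 * x) (-(2 * x + 1)) (1 + x) = s * s := by
    rw [discrim, Real.mul_self_sqrt hD.le]; ring
  rcases (quadratic_eq_zero_iff (by positivity) hdiscrim S).1 (by linear_combination -hS) with h | h
  · exfalso
    have h4S : 4 * x * S = 2 * x + 1 + s := by rw [h]; field_simp; ring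
    rcases hx.lt_or_gt with hneg | hpos
    · rw [abs_of_neg hneg] at hbound
      have hlow : 2 - genFun (-x) ≤ S := by linarith [(abs_le.1 hbound).1]
      have h4L := mul_genFun (neg_ne_zero.2 hx)
      linarith [mul_le_mul_of_nonneg_left hlow (by linarith : 0 ≤ 4 * -x),
        Real.sqrt_nonneg (1 - 4 * -x - 4 * (-x) ^ 2)]
    · rw [abs_of_pos hpos] at hbound
      have hup : S ≤ genFun x := by linarith [(abs_le.1 hbound).2]
      linarith [mul_le_mul_of_nonneg_left hup (by linarith : 0 ≤ 4 * x), mul_genFun hx]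
  · rw [h, genFun]
    ring

theorem stmt_6 (G : ℕ → ℕ) (hG0 : G 0 = 1) (hG1 : G 1 = 1)
    (hGrec : ∀ n, 2 ≤ n → G n = 2 * ∑ m ∈ Finset.Ico 1 n, G m * G (n - 1 - m)) :
    ∀ x : ℝ, 0 < |x| → |x| < (Real.sqrt 2 - 1) / 2 →
      HasSum (fun n : ℕ => (G n : ℝ) * x ^ n)
        ((2 * x + 1 - Real.sqrt (1 - 4 * x - 4 * x ^ 2)) / (4 * x)) := by
  intro x hx hxr
  have hG := satisfiesGRec_of_recurrence G hG0 hG1 hGrec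
  have hsqrt2 : Real.sqrt 2 ≤ 2 := Real.sqrt_le_iff.2 ⟨zero_le_two, by norm_num⟩
  have hbound : ∀ N, ∑ n ∈ range N, (G n : ℝ) * |x| ^ n ≤ genFun |x| := by
    have hfix := genFun_sub_eq hx.ne' (one_sub_four_mul_sub_pos (by rwa [abs_abs])).le
    exact (hG |x|).sum_range_le (abs_nonneg x) (fun n => by positivity)
      (one_le_genFun hx (by linarith)) (by linarith)
  have habs : ∀ n, |(G n : ℝ) * x ^ n| = G n * |x| ^ n := fun n => by simp [abs_mul, abs_pow]
  have hsum : Summable fun n => ‖(G n : ℝ) * x ^ n‖ := by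
    simpa only [Real.norm_eq_abs, habs] using
      summable_of_sum_range_le (fun n => by positivity) hbound
  have hS1 : |∑' n, (G n : ℝ) * x ^ n - 1| ≤ genFun |x| - 1 := by
    have h := norm_tsum_sub_le hsum
    simp only [Real.norm_eq_abs, habs, hG0, pow_zero, Nat.cast_one, mul_one, abs_one] at h
    linarith [Real.tsum_le_of_sum_range_le (fun n => by positivity) hbound]
  rw [← genFun, ← eq_genFun_of_sub_eq (abs_pos.1 hx) hxr ((hG x).tsum_sub_eq hsum) hS1]
  exact hsum.of_norm.hasSum
end

section
/- Let G be the sequence defined by G(0) = G(1) = 1 and G(n) = 2·∑_{m=1}^{n−1} G(m)·G(n−1−m) for n ≥ 2, and for real x with |x| < (√2 − 1)/2 let ζ(x) = ∑_{n≥0} G(n)·xⁿ. Then ζ(x) satisfies the quadratic equation 2x·ζ(x)² − (2x + 1)·ζ(x) + (x + 1) = 0. -/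
/-!
Put `a n = G n * t ^ n`. Since `G 0 = 1`, the recurrence says that for `n ≥ 1` the Cauchy
square `c n = ∑_{i+j=n} a i * a j` satisfies `2 t c n = a (n+1) + 2 t a n`. Summed over `n < N`,
this gives `S (N+1) + 2 t S N = 1 + t + 2 t ∑_{n<N} c n` for the partial sums `S N`, and letting
`N → ∞` (Cauchy product) yields `S + 2 t S = 1 + t + 2 t S ^ 2`.

Absolute convergence: for `t ≥ 0` the terms are nonnegative and `∑_{n<N} c n ≤ S N ^ 2`, so
`S (N+1) ≤ 1 + t + 2 t (S N ^ 2 - S N)`. This map sends `[0, L]` into itself for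
`L = 1 / (1 - 2t)` exactly when `8 t ^ 2 ≤ (1 - 2t) ^ 2`, i.e. `t ≤ (√2 - 1) / 2`.
-/

open Finset Filter Topology

theorem sum_range_sum_antidiagonal_le_sq {R : Type*} [CommSemiring R] [PartialOrder R]
    [IsOrderedRing R] {a : ℕ → R} (ha : ∀ n, 0 ≤ a n) (N : ℕ) :
    ∑ n ∈ range N, ∑ p ∈ antidiagonal n, a p.1 * a p.2 ≤ (∑ n ∈ range N, a n) ^ 2 := by
  simp_rw [Nat.sum_antidiagonal_eq_sum_range_succ (fun i j => a i * a j),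
    sum_range_diag_flip (f := fun i j => a i * a j), ← mul_sum, sq, sum_mul]
  gcongr with m hm
  · exact ha m
  · exact fun i _ _ => ha i
  · exact Nat.sub_le N m

/-- Satisfied by `a n = G n * t ^ n` for every `t`; using it also for `t = |x|` turns the
convergence bound for nonnegative terms into absolute convergence. -/
structure ZetaRecurrence (a : ℕ → ℝ) (t : ℝ) : Prop where
  zero : a 0 = 1
  one : a 1 = t
  succ : ∀ n, 1 ≤ n → a (n + 1) + 2 * t * a n = 2 * t * ∑ p ∈ antidiagonal n, a p.1 * a p.2

namespace ZetaRecurrence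

variable {a : ℕ → ℝ} {t : ℝ}

theorem sum_range_succ_add (h : ZetaRecurrence a t) {N : ℕ} (hN : 1 ≤ N) :
    ∑ n ∈ range (N + 1), a n + 2 * t * ∑ n ∈ range N, a n =
      1 + t + 2 * t * ∑ n ∈ range N, ∑ p ∈ antidiagonal n, a p.1 * a p.2 := by
  induction N, hN using Nat.le_induction with
  | base => simp [sum_range_succ, h.zero, h.one]
  | succ N hN ih =>
    rw [sum_range_succ _ (N + 1), sum_range_succ (fun n => ∑ p ∈ antidiagonal n, _) N]
    linear_combination ih + h.succ N hN + 2 * t * sum_range_succ a N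

theorem sum_range_le (h : ZetaRecurrence a t) (ha : ∀ n, 0 ≤ a n)
    (hdisc : 4 * t ^ 2 + 4 * t ≤ 1) (N : ℕ) : ∑ n ∈ range N, a n ≤ 1 / (1 - 2 * t) := by
  have ht : 0 ≤ t := h.one ▸ ha 1
  have h2t : 0 < 1 - 2 * t := by nlinarith
  set L := 1 / (1 - 2 * t) with hLdef
  have hL1 : 1 ≤ L := by rw [le_div_iff₀ h2t]; linarith
  have hL : 1 + t + 2 * t * (L ^ 2 - L) ≤ L := by
    have hgap :
        L - (1 + t + 2 * t * (L ^ 2 - L)) = t * (1 - 4 * t ^ 2 - 4 * t) / (1 - 2 * t) ^ 2 := by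
      rw [hLdef]
      field_simp
      ring
    rw [← sub_nonneg, hgap]
    exact div_nonneg (mul_nonneg ht (by linarith)) (sq_nonneg _)
  induction N with
  | zero => rw [sum_range_zero]; linarith
  | succ N ih =>
    rcases Nat.eq_zero_or_pos N with rfl | hN
    · simpa [h.zero] using hL1
    set S := ∑ n ∈ range N, a n
    have hS0 : 0 ≤ S := sum_nonneg fun n _ => ha n
    calc ∑ n ∈ range (N + 1), a n
        = 1 + t + 2 * t * ∑ n ∈ range N, ∑ p ∈ antidiagonal n, a p.1 * a p.2 - 2 * t * S := by
          linarith [h.sum_range_succ_add hN]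
      _ ≤ 1 + t + 2 * t * (S ^ 2 - S) := by
          linarith [mul_le_mul_of_nonneg_left (sum_range_sum_antidiagonal_le_sq ha N) ht]
      _ ≤ 1 + t + 2 * t * (L ^ 2 - L) := by
          have : S ^ 2 - S ≤ L ^ 2 - L := by
            nlinarith [mul_nonneg (sub_nonneg.2 ih) (by linarith : 0 ≤ L + S - 1)]
          gcongr
      _ ≤ L := hL

theorem summable (h : ZetaRecurrence a t) (ha : ∀ n, 0 ≤ a n)
    (hdisc : 4 * t ^ 2 + 4 * t ≤ 1) : Summable a :=
  summable_of_sum_range_le ha (h.sum_range_le ha hdisc)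

theorem quadratic_tsum (h : ZetaRecurrence a t) (ha : Summable fun n => ‖a n‖) :
    2 * t * (∑' n, a n) ^ 2 - (2 * t + 1) * (∑' n, a n) + (t + 1) = 0 := by
  set S := ∑' n, a n
  have hS : Tendsto (fun N => ∑ n ∈ range N, a n) atTop (𝓝 S) :=
    ha.of_norm.hasSum.tendsto_sum_nat
  have hconv : Tendsto (fun N => ∑ n ∈ range N, ∑ p ∈ antidiagonal n, a p.1 * a p.2) atTop
      (𝓝 (S ^ 2)) := by
    rw [sq, tsum_mul_tsum_eq_tsum_sum_antidiagonal_of_summable_norm ha ha]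
    exact (summable_norm_sum_mul_antidiagonal_of_summable_norm ha ha).of_norm.hasSum
      |>.tendsto_sum_nat
  have hlim := tendsto_nhds_unique_of_eventuallyEq
    ((hS.comp (tendsto_add_atTop_nat 1)).add (hS.const_mul (2 * t)))
    ((hconv.const_mul (2 * t)).const_add (1 + t))
    (eventually_atTop.2 ⟨1, fun N hN => h.sum_range_succ_add hN⟩)
  linear_combination -hlim

end ZetaRecurrence

theorem two_mul_sum_antidiagonal_eq (G : ℕ → ℕ) (hG0 : G 0 = 1)
    (hGrec : ∀ n, 2 ≤ n → G n = 2 * ∑ m ∈ Finset.Ico 1 n, G m * G (n - 1 - m)) {n : ℕ}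
    (hn : 1 ≤ n) : 2 * ∑ p ∈ antidiagonal n, G p.1 * G p.2 = 2 * G n + G (n + 1) := by
  rw [Nat.sum_antidiagonal_eq_sum_range_succ (fun i j => G i * G j), range_eq_Ico,
    sum_eq_sum_Ico_succ_bot (by omega), hGrec (n + 1) (by omega)]
  simp only [hG0, tsub_zero, one_mul, zero_add, add_tsub_cancel_right]
  ring

theorem zetaRecurrence_mul_pow (G : ℕ → ℕ) (hG0 : G 0 = 1) (hG1 : G 1 = 1)
    (hGrec : ∀ n, 2 ≤ n → G n = 2 * ∑ m ∈ Finset.Ico 1 n, G m * G (n - 1 - m)) (x : ℝ) :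
    ZetaRecurrence (fun n => G n * x ^ n) x where
  zero := by simp [hG0]
  one := by simp [hG1]
  succ n hn := by
    have hG : 2 * ∑ p ∈ antidiagonal n, (G p.1 * G p.2 : ℝ) = 2 * G n + G (n + 1) := by
      exact_mod_cast two_mul_sum_antidiagonal_eq G hG0 hGrec hn
    have hterm : ∀ p ∈ antidiagonal n,
        (G p.1 * x ^ p.1) * (G p.2 * x ^ p.2) = G p.1 * G p.2 * x ^ n := by
      intro p hp
      rw [← mem_antidiagonal.1 hp, pow_add]
      ring
    rw [sum_congr rfl hterm, ← sum_mul]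
    linear_combination -x ^ (n + 1) * hG

theorem stmt_7 (G : ℕ → ℕ) (hG0 : G 0 = 1) (hG1 : G 1 = 1)
    (hGrec : ∀ n, 2 ≤ n → G n = 2 * ∑ m ∈ Finset.Ico 1 n, G m * G (n - 1 - m)) :
    ∀ x : ℝ, |x| < (Real.sqrt 2 - 1) / 2 →
      2 * x * (∑' n : ℕ, (G n : ℝ) * x ^ n) ^ 2 -
        (2 * x + 1) * (∑' n : ℕ, (G n : ℝ) * x ^ n) + (x + 1) = 0 := by
  intro x hx
  have hdisc : 4 * |x| ^ 2 + 4 * |x| ≤ 1 := by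
    nlinarith [Real.sq_sqrt (show (0 : ℝ) ≤ 2 by norm_num), abs_nonneg x]
  have habs : Summable fun n => ‖(G n : ℝ) * x ^ n‖ := by
    simpa [norm_mul, norm_pow] using
      (zetaRecurrence_mul_pow G hG0 hG1 hGrec |x|).summable (fun n => by positivity) hdisc
  exact (zetaRecurrence_mul_pow G hG0 hG1 hGrec x).quadratic_tsum habs
end

section
/- Let G be the sequence defined by G(0) = G(1) = 1 and G(n) = 2·∑_{m=1}^{n−1} G(m)·G(n−1−m) for n ≥ 2. Then the radius of convergence of the power series ∑_{n≥0} G(n)·xⁿ equals (√2 − 1)/2; equivalently, limsup_{n→∞} G(n)^{1/n} = 2 + 2√2. -/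
set_option maxHeartbeats 1000000
set_option linter.deprecated false

open Finset Filter

section Aux

variable (G : ℕ → ℕ) (hG0 : G 0 = 1) (hG1 : G 1 = 1)
    (hGrec : ∀ n, 2 ≤ n → G n = 2 * ∑ m ∈ Finset.Ico 1 n, G m * G (n - 1 - m))

include hG0 hG1 hGrec

lemma stmt8_key (x : ℝ) (N : ℕ) :
    ∑ n ∈ range (N + 2), (G n : ℝ) * x ^ n
      = 1 + x + 2 * x * ∑ m ∈ Ico 1 (N + 1),
          ((G m : ℝ) * x ^ m) * ∑ j ∈ range (N + 1 - m), (G j : ℝ) * x ^ j := by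
  set b : ℕ → ℝ := fun n => (G n : ℝ) * x ^ n with hb
  have hsplit : ∑ n ∈ range (N + 2), b n
      = (b 0 + b 1) + ∑ n ∈ Ico 2 (N + 2), b n := by
    rw [range_eq_Ico, ← Finset.sum_Ico_consecutive _ (by omega : (0:ℕ) ≤ 2) (by omega : 2 ≤ N + 2)]
    congr 1
    rw [show Finset.Ico 0 2 = {0, 1} by decide]
    simp
  have hb0 : b 0 = 1 := by simp [hb, hG0]
  have hb1 : b 1 = x := by simp [hb, hG1]
  have h2 : ∀ n ∈ Ico 2 (N + 2), b n = 2 * x * ∑ m ∈ Ico 1 n, b m * b (n - 1 - m) := by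
    intro n hn
    rw [Finset.mem_Ico] at hn
    have hrec := hGrec n hn.1
    simp only [hb]
    rw [hrec]
    push_cast
    rw [mul_assoc, Finset.sum_mul, Finset.mul_sum, Finset.mul_sum]
    apply Finset.sum_congr rfl
    intro m hm
    rw [Finset.mem_Ico] at hm
    rw [show n = m + (n - 1 - m) + 1 by omega, pow_add, pow_add, pow_one]
    have : m + (n - 1 - m) + 1 - 1 - m = n - 1 - m := by omega
    rw [this]
    ring
  rw [hsplit, hb0, hb1, Finset.sum_congr rfl h2, ← Finset.mul_sum]
  congr 1
  have h3 : ∑ n ∈ Ico 2 (N + 2), ∑ m ∈ Ico 1 n, b m * b (n - 1 - m)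
      = ∑ k ∈ Ico 1 (N + 1), ∑ m ∈ Ico 1 (k + 1), b m * b (k - m) := by
    rw [Finset.sum_Ico_eq_sum_range, Finset.sum_Ico_eq_sum_range]
    have e1 : N + 2 - 2 = N := by omega
    have e2 : N + 1 - 1 = N := by omega
    rw [e1, e2]
    apply Finset.sum_congr rfl
    intro i _
    have e3 : Finset.Ico 1 (2 + i) = Finset.Ico 1 (1 + i + 1) := by congr 1; omega
    rw [e3]
    apply Finset.sum_congr rfl
    intro m hm
    congr 2
    omega
  congr 1
  rw [h3, ← Finset.sum_Ico_Ico_comm 1 (N + 1) (fun m k => b m * b (k - m))]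
  apply Finset.sum_congr rfl
  intro m hm
  rw [Finset.mem_Ico] at hm
  rw [← Finset.mul_sum]
  congr 1
  rw [Finset.sum_Ico_eq_sum_range]
  apply Finset.sum_congr rfl
  intro j _
  congr 1
  omega

lemma stmt8_sub_one (x : ℝ) (N : ℕ) :
    (∑ n ∈ range (N + 1), (G n : ℝ) * x ^ n) - 1
      = ∑ m ∈ Ico 1 (N + 1), (G m : ℝ) * x ^ m := by
  rw [range_eq_Ico,
    ← Finset.sum_Ico_consecutive _ (by omega : (0:ℕ) ≤ 1) (by omega : 1 ≤ N + 1),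
    show Finset.Ico 0 1 = {0} by decide]
  simp [hG0]

lemma stmt8_upper (x : ℝ) (hx : 0 < x) (N : ℕ) :
    ∑ n ∈ range (N + 2), (G n : ℝ) * x ^ n
      ≤ 1 + x + 2 * x * ((∑ n ∈ range (N + 1), (G n : ℝ) * x ^ n) - 1)
          * (∑ n ∈ range (N + 1), (G n : ℝ) * x ^ n) := by
  rw [stmt8_key G hG0 hG1 hGrec x N, stmt8_sub_one G hG0 hG1 hGrec x N,
    mul_assoc (2 * x), Finset.sum_mul]
  have hsum : ∑ m ∈ Ico 1 (N + 1), ((G m : ℝ) * x ^ m) * (∑ j ∈ range (N + 1 - m), (G j : ℝ) * x ^ j)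
      ≤ ∑ m ∈ Ico 1 (N + 1), ((G m : ℝ) * x ^ m) * (∑ n ∈ range (N + 1), (G n : ℝ) * x ^ n) := by
    apply Finset.sum_le_sum
    intro m hm
    apply mul_le_mul_of_nonneg_left _ (by positivity)
    exact Finset.sum_le_sum_of_subset_of_nonneg
      (Finset.range_subset_range.mpr (by omega)) (fun i _ _ => by positivity)
  have := mul_le_mul_of_nonneg_left hsum (by positivity : (0:ℝ) ≤ 2 * x)
  linarith

lemma stmt8_lower (x : ℝ) (hx : 0 < x) (K : ℕ) :
    1 + x + 2 * x * ((∑ n ∈ range (K + 1), (G n : ℝ) * x ^ n) - 1)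
          * (∑ n ∈ range (K + 1), (G n : ℝ) * x ^ n)
      ≤ ∑ n ∈ range (2 * K + 2), (G n : ℝ) * x ^ n := by
  rw [show 2 * K + 2 = 2 * K + 1 + 1 by ring, show 2 * K + 1 + 1 = 2 * K + 2 by ring]
  rw [stmt8_key G hG0 hG1 hGrec x (2 * K), stmt8_sub_one G hG0 hG1 hGrec x K,
    mul_assoc (2 * x), Finset.sum_mul]
  have hsum : ∑ m ∈ Ico 1 (K + 1), ((G m : ℝ) * x ^ m) * (∑ n ∈ range (K + 1), (G n : ℝ) * x ^ n)
      ≤ ∑ m ∈ Ico 1 (2 * K + 1), ((G m : ℝ) * x ^ m) * (∑ j ∈ range (2 * K + 1 - m), (G j : ℝ) * x ^ j) := by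
    refine le_trans (Finset.sum_le_sum ?_)
      (Finset.sum_le_sum_of_subset_of_nonneg
        (Finset.Ico_subset_Ico le_rfl (by omega)) (fun i _ _ => by positivity))
    intro m hm
    rw [Finset.mem_Ico] at hm
    apply mul_le_mul_of_nonneg_left _ (by positivity)
    exact Finset.sum_le_sum_of_subset_of_nonneg
      (Finset.range_subset_range.mpr (by omega)) (fun i _ _ => by positivity)
  have := mul_le_mul_of_nonneg_left hsum (by positivity : (0:ℝ) ≤ 2 * x)
  linarith

lemma stmt8_one_le : ∀ n, 1 ≤ G n := by
  intro n
  induction n using Nat.strong_induction_on with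
  | _ n ih =>
    match n, ih with
    | 0, _ => omega
    | 1, _ => omega
    | (n + 2), ih =>
      rw [hGrec (n + 2) (by omega)]
      have hmem : n + 1 ∈ Finset.Ico 1 (n + 2) := by simp
      have h1 : 1 ≤ G (n + 1) := ih (n + 1) (by omega)
      have key : G (n + 1) * G (n + 2 - 1 - (n + 1)) ≤ ∑ m ∈ Finset.Ico 1 (n + 2), G m * G (n + 2 - 1 - m) :=
        Finset.single_le_sum (f := fun m => G m * G (n + 2 - 1 - m))
          (fun i _ => Nat.zero_le _) hmem
      have e : n + 2 - 1 - (n + 1) = 0 := by omega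
      rw [e, hG0, mul_one] at key
      omega

end Aux

theorem stmt_8 (G : ℕ → ℕ) (hG0 : G 0 = 1) (hG1 : G 1 = 1)
    (hGrec : ∀ n, 2 ≤ n → G n = 2 * ∑ m ∈ Finset.Ico 1 n, G m * G (n - 1 - m)) :
    Filter.limsup (fun n : ℕ => (G n : ℝ) ^ ((n : ℝ)⁻¹)) Filter.atTop
      = 2 + 2 * Real.sqrt 2 := by
  have hs2 : Real.sqrt 2 ^ 2 = 2 := Real.sq_sqrt (by norm_num)
  have hs2nn : 0 ≤ Real.sqrt 2 := Real.sqrt_nonneg 2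
  have hs2one : 1 < Real.sqrt 2 := by nlinarith
  set s2 : ℝ := Real.sqrt 2 with hs2def
  set ρ : ℝ := (s2 - 1) / 2 with hρdef
  set r : ℝ := 2 + 2 * s2 with hrdef
  set y : ℝ := 1 + s2 / 2 with hydef
  have hρpos : 0 < ρ := by rw [hρdef]; linarith
  have hrpos : 1 < r := by rw [hrdef]; linarith
  have hρr : ρ * r = 1 := by rw [hρdef, hrdef]; nlinarith
  have hy1 : 1 ≤ y := by rw [hydef]; linarith
  have hroot : 1 + ρ + 2 * ρ * (y - 1) * y = y := by
    rw [hρdef, hydef]; nlinarith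
  -- partial sums at ρ are bounded by y
  have hPy : ∀ N, ∑ n ∈ range (N + 1), (G n : ℝ) * ρ ^ n ≤ y := by
    intro N
    induction N with
    | zero => simp [hG0]; linarith
    | succ N ih =>
      have h1le : 1 ≤ ∑ n ∈ range (N + 1), (G n : ℝ) * ρ ^ n := by
        have := Finset.single_le_sum (f := fun n => (G n : ℝ) * ρ ^ n)
          (fun i _ => by positivity) (Finset.mem_range.mpr (show 0 < N + 1 by omega))
        simpa [hG0] using this
      refine le_trans (stmt8_upper G hG0 hG1 hGrec ρ hρpos N) ?_
      set S := ∑ n ∈ range (N + 1), (G n : ℝ) * ρ ^ n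
      nlinarith [mul_nonneg (mul_nonneg hρpos.le (sub_nonneg.mpr ih)) (sub_nonneg.mpr (le_trans h1le ih)),
        mul_nonneg hρpos.le (mul_nonneg (sub_nonneg.mpr h1le) (sub_nonneg.mpr ih))]
  have hGle : ∀ n, (G n : ℝ) ≤ y * r ^ n := by
    intro n
    have hb : (G n : ℝ) * ρ ^ n ≤ y := by
      refine le_trans ?_ (hPy n)
      exact Finset.single_le_sum (f := fun k => (G k : ℝ) * ρ ^ k)
        (fun i _ => by positivity) (Finset.mem_range.mpr (by omega))
    have := mul_le_mul_of_nonneg_right hb (by positivity : (0:ℝ) ≤ r ^ n)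
    calc (G n : ℝ) = (G n : ℝ) * ρ ^ n * r ^ n := by
          rw [mul_assoc, ← mul_pow, hρr, one_pow, mul_one]
      _ ≤ y * r ^ n := this
  set u : ℕ → ℝ := fun n : ℕ => (G n : ℝ) ^ ((n : ℝ)⁻¹) with hudef
  have hu1 : ∀ n, 1 ≤ u n := by
    intro n
    exact Real.one_le_rpow (by exact_mod_cast stmt8_one_le G hG0 hG1 hGrec n) (by positivity)
  have hunn : ∀ n, 0 ≤ u n := fun n => le_trans zero_le_one (hu1 n)
  have huble : ∀ n, 1 ≤ n → u n ≤ y ^ ((n : ℝ)⁻¹) * r := by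
    intro n hn
    have h1 : u n ≤ (y * r ^ n) ^ ((n : ℝ)⁻¹) := by
      exact Real.rpow_le_rpow (by positivity) (hGle n) (by positivity)
    have h2 : (y * r ^ n) ^ ((n : ℝ)⁻¹) = y ^ ((n : ℝ)⁻¹) * (r ^ n) ^ ((n : ℝ)⁻¹) :=
      Real.mul_rpow (by linarith) (by positivity)
    have h3 : ((r : ℝ) ^ n) ^ ((n : ℝ)⁻¹) = r :=
      Real.pow_rpow_inv_natCast (by linarith) (by omega)
    rw [h2, h3] at h1
    exact h1
  have hub2 : ∀ n, u n ≤ y * r := by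
    intro n
    rcases Nat.eq_zero_or_pos n with h | h
    · subst h
      have : u 0 = 1 := by simp [hudef]
      rw [this]; nlinarith
    · refine le_trans (huble n h) ?_
      have : y ^ ((n : ℝ)⁻¹) ≤ y ^ (1 : ℝ) := by
        apply Real.rpow_le_rpow_of_exponent_le hy1
        rw [show (1:ℝ) = ((1:ℕ):ℝ)⁻¹ by norm_num]
        apply inv_anti₀ (by norm_num)
        exact_mod_cast h
      rw [Real.rpow_one] at this
      nlinarith
  have hbdd : IsBoundedUnder (· ≤ ·) atTop u := isBoundedUnder_of ⟨y * r, hub2⟩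
  -- limsup ≤ r
  have hle : limsup u atTop ≤ r := by
    have hv : Tendsto (fun n : ℕ => y ^ ((n : ℝ)⁻¹) * r) atTop (nhds r) := by
      have h0 : Tendsto (fun n : ℕ => ((n : ℝ))⁻¹) atTop (nhds 0) :=
        tendsto_inv_atTop_nhds_zero_nat
      have h1 : Tendsto (fun n : ℕ => y ^ ((n : ℝ)⁻¹)) atTop (nhds 1) := by
        have := (Filter.Tendsto.rpow (tendsto_const_nhds (x := y)) h0
          (Or.inl (by linarith)))
        simpa using this
      have := h1.mul_const r
      simpa using this
    have hvb : IsBoundedUnder (· ≤ ·) atTop (fun n : ℕ => y ^ ((n : ℝ)⁻¹) * r) :=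
      hv.isBoundedUnder_le
    have hlb : IsBoundedUnder (· ≥ ·) atTop u := isBoundedUnder_of ⟨1, fun n => hu1 n⟩
    have hcb : IsCoboundedUnder (· ≤ ·) atTop u := hlb.isCoboundedUnder_le
    have hev : u ≤ᶠ[atTop] fun n : ℕ => y ^ ((n : ℝ)⁻¹) * r := by
      filter_upwards [eventually_ge_atTop 1] with n hn using huble n hn
    calc limsup u atTop ≤ limsup (fun n : ℕ => y ^ ((n : ℝ)⁻¹) * r) atTop :=
          limsup_le_limsup hev hcb hvb
      _ = r := hv.limsup_eq
  refine le_antisymm hle ?_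
  -- limsup ≥ r, by contradiction
  by_contra hlt
  push_neg at hlt
  set L := limsup u atTop with hLdef
  have hL1 : 1 ≤ L :=
    le_limsup_of_frequently_le (Frequently.of_forall hu1) hbdd
  set s : ℝ := (L + r) / 2 with hsdef
  have hs1 : 1 ≤ s := by rw [hsdef]; linarith
  have hspos : 0 < s := by linarith
  have hsr : s < r := by rw [hsdef]; linarith
  have hLs : L < s := by rw [hsdef]; linarith
  obtain ⟨N₀, hN₀⟩ := eventually_atTop.mp (eventually_lt_of_limsup_lt hLs hbdd)
  have hGs : ∀ n, N₀ ≤ n → 1 ≤ n → (G n : ℝ) ≤ s ^ n := by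
    intro n hn hn1
    have h1 : u n < s := hN₀ n hn
    have h2 : (G n : ℝ) = (u n) ^ n := by
      rw [hudef]
      exact (Real.rpow_inv_natCast_pow (by positivity) (by omega)).symm
    rw [h2]
    exact pow_le_pow_left₀ (hunn n) h1.le n
  have hrne : r ≠ 0 := ne_of_gt (by linarith : (0:ℝ) < r)
  have hρinv : ρ = r⁻¹ := by
    field_simp
    linarith [hρr]
  have hrs : r⁻¹ < s⁻¹ := by
    apply inv_strictAnti₀ hspos hsr
  set x : ℝ := (ρ + s⁻¹) / 2 with hxdef
  have hρx : ρ < x := by rw [hxdef]; rw [hρinv]; linarith [hrs]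
  have hxs : x < s⁻¹ := by rw [hxdef, hρinv]; linarith [hrs]
  have hxpos : 0 < x := lt_trans hρpos hρx
  set q : ℝ := x * s with hqdef
  have hq0 : 0 < q := by positivity
  have hq1 : q < 1 := by
    rw [hqdef]
    calc x * s < s⁻¹ * s := by exact mul_lt_mul_of_pos_right hxs hspos
      _ = 1 := inv_mul_cancel₀ (ne_of_gt hspos)
  set N₁ : ℕ := max N₀ 1 with hN₁def
  have haq : ∀ n, N₁ ≤ n → (G n : ℝ) * x ^ n ≤ q ^ n := by
    intro n hn
    have h1 : (G n : ℝ) ≤ s ^ n := hGs n (le_trans (le_max_left _ _) hn)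
      (le_trans (le_max_right _ _) hn)
    calc (G n : ℝ) * x ^ n ≤ s ^ n * x ^ n :=
          mul_le_mul_of_nonneg_right h1 (by positivity)
      _ = q ^ n := by rw [hqdef, ← mul_pow, mul_comm s x]
  set A : ℝ := 1 + ∑ n ∈ range N₁, (G n : ℝ) * x ^ n / q ^ n with hAdef
  have hA1 : 1 ≤ A := by
    rw [hAdef]
    have : 0 ≤ ∑ n ∈ range N₁, (G n : ℝ) * x ^ n / q ^ n := by positivity
    linarith
  have hbA : ∀ n, (G n : ℝ) * x ^ n ≤ A * q ^ n := by
    intro n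
    rcases lt_or_ge n N₁ with h | h
    · have h1 : (G n : ℝ) * x ^ n / q ^ n ≤ A := by
        rw [hAdef]
        have := Finset.single_le_sum (f := fun k => (G k : ℝ) * x ^ k / q ^ k)
          (fun i _ => by positivity) (Finset.mem_range.mpr h)
        linarith
      calc (G n : ℝ) * x ^ n = ((G n : ℝ) * x ^ n / q ^ n) * q ^ n := by
            field_simp
        _ ≤ A * q ^ n := mul_le_mul_of_nonneg_right h1 (by positivity)
    · calc (G n : ℝ) * x ^ n ≤ q ^ n := haq n h
        _ ≤ A * q ^ n := le_mul_of_one_le_left (by positivity) hA1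
  have hPbd : ∀ M, ∑ n ∈ range (M + 1), (G n : ℝ) * x ^ n ≤ A * (1 - q)⁻¹ := by
    intro M
    calc ∑ n ∈ range (M + 1), (G n : ℝ) * x ^ n
        ≤ ∑ n ∈ range (M + 1), A * q ^ n := Finset.sum_le_sum (fun n _ => hbA n)
      _ = A * ∑ n ∈ range (M + 1), q ^ n := by rw [Finset.mul_sum]
      _ ≤ A * (1 - q)⁻¹ := by
          apply mul_le_mul_of_nonneg_left _ (by linarith)
          calc ∑ n ∈ range (M + 1), q ^ n ≤ ∑' n : ℕ, q ^ n :=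
                Summable.sum_le_tsum _ (fun i _ => by positivity)
                  (summable_geometric_of_lt_one hq0.le hq1)
            _ = (1 - q)⁻¹ := tsum_geometric_of_lt_one hq0.le hq1
  set δ : ℝ := (4 * x ^ 2 + 4 * x - 1) / (8 * x) with hδdef
  have hδ8 : 8 * x * δ = 4 * x ^ 2 + 4 * x - 1 := by
    rw [hδdef]; field_simp
  have hδpos : 0 < δ := by
    rw [hδdef]
    apply div_pos _ (by linarith)
    have h4ρ : 4 * ρ ^ 2 + 4 * ρ - 1 = 0 := by rw [hρdef]; nlinarith
    nlinarith [mul_pos (sub_pos.mpr hρx) (show (0:ℝ) < x + ρ + 1 by linarith)]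
  have hψ : ∀ t : ℝ, t + δ ≤ 1 + x + 2 * x * (t - 1) * t := by
    intro t
    nlinarith [sq_nonneg (4 * x * t - (1 + 2 * x)), hxpos, hδ8]
  have hiter : ∀ j : ℕ, 1 + (j : ℝ) * δ ≤ ∑ n ∈ range (2 ^ j - 1 + 1), (G n : ℝ) * x ^ n := by
    intro j
    induction j with
    | zero => simp [hG0]
    | succ j ih =>
      have hpow : 1 ≤ 2 ^ j := Nat.one_le_two_pow
      have harith : 2 ^ (j + 1) - 1 + 1 = 2 * (2 ^ j - 1) + 2 := by
        have : 2 ^ (j + 1) = 2 * 2 ^ j := by rw [pow_succ]; ring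
        omega
      rw [harith]
      refine le_trans ?_ (stmt8_lower G hG0 hG1 hGrec x hxpos (2 ^ j - 1))
      set T := ∑ n ∈ range (2 ^ j - 1 + 1), (G n : ℝ) * x ^ n
      have hT := hψ T
      push_cast
      linarith
  obtain ⟨j, hj⟩ := exists_nat_gt ((A * (1 - q)⁻¹ - 1) / δ)
  have h1 := hiter j
  have h2 := hPbd (2 ^ j - 1)
  rw [div_lt_iff₀ hδpos] at hj
  linarith
end
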